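/- For powers of 2 N₁, N₂ with 8 ≤ N₁ ≤ N₂, all four Ungerboeck sums S^e_1+S^e_2, S^e_1+S^o_2, S^o_1+S^e_2, S^o_1+S^o_2 have the same minimum Euclidean distance 4·sin(π/(2N₂))·sin(2π/N₁). -/

import Mathlib

open Real

/-- The four Ungerboeck sumsets `S^{b₁}_1 + S^{b₂}_2`: `b = true` selects the
even-index half, `b = false` the odd-index half, of the `N₁`-PSK
`{e^{2πi n/N₁}}` and of the rotated `N₂`-PSK `{e^{2πi n/N₂}·e^{iπ/N₂}}`. -/
noncomputable def ungSum (N₁ N₂ : ℕ) (b₁ b₂ : Bool) : Set ℂ :=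
  {z | ∃ n₁ n₂ : ℕ, n₁ < N₁ ∧ (if b₁ then Even n₁ else Odd n₁) ∧
    n₂ < N₂ ∧ (if b₂ then Even n₂ else Odd n₂) ∧
    z = Complex.exp (2 * Real.pi * n₁ / N₁ * Complex.I) +
        Complex.exp (Real.pi * (2 * n₂ + 1) / N₂ * Complex.I)}

/-!
Write `a - b = 2j` and `c - d = 2k` for two points of a sumset. Their squared distance is
`4 (s₁² + s₂² + 2 s₁ s₂ cos φ)` with `s₁ = sin (2πj/N₁)`, `s₂ = sin (2πk/N₂)`, and `φ` an odd
multiple of `π/N₂`, so that `|cos φ| ≤ cos (π/N₂)`. Both `|s₁|` and `|s₂|` are sines of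
multiples of `2π/N₂` lying in `[0, π/2]`; comparing the two multiples gives
`|s₁|² + |s₂|² - 2 cos (π/N₂) |s₁| |s₂| ≥ 4 sin² (π/(2N₂)) s₁²`, and `|s₁| ≥ sin (2π/N₁)` once
`j ≠ 0` (for `j = 0` one uses `|s₂| ≥ sin (2π/N₂) ≥ 2 sin (π/(2N₂))` instead). The bound is
attained by two antiparallel chords, `a - b = 2` and `c - d = 2N₂/N₁`, placed half a turn apart.
-/

lemma abs_cos_le_cos_of_le_abs {y δ : ℝ} (hδ : 0 ≤ δ) (h₁ : δ ≤ |y|) (h₂ : |y| ≤ π - δ) :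
    |cos y| ≤ cos δ := by
  rw [← cos_abs y, abs_le]
  constructor
  · rw [neg_le, ← cos_pi_sub]
    exact cos_le_cos_of_nonneg_of_le_pi hδ (by linarith [abs_nonneg y]) (by linarith)
  · exact cos_le_cos_of_nonneg_of_le_pi hδ (by linarith) h₁

lemma abs_cos_int_mul_pi_div_le {N : ℕ} (hN : 0 < N) {m : ℤ} (hm : ¬(N : ℤ) ∣ m) :
    |cos (m * π / N)| ≤ cos (π / N) := by
  have hN' : (0 : ℝ) < N := by exact_mod_cast hN
  have hρ₁ : (1 : ℝ) ≤ (m % N : ℤ) := by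
    have : 0 < m % N :=
      (Int.emod_nonneg m (by omega)).lt_of_ne (Ne.symm (mt Int.dvd_of_emod_eq_zero hm))
    exact_mod_cast this
  have hρN : ((m % N : ℤ) : ℝ) + 1 ≤ N := by
    have : m % N < N := Int.emod_lt_of_pos m (by omega)
    exact_mod_cast this
  have hm' : (m : ℝ) = (m % N : ℤ) + N * (m / N : ℤ) := by
    exact_mod_cast (Int.emod_add_mul_ediv m N).symm
  have hρ : ((m % N : ℤ) : ℝ) * π / N + (m / N : ℤ) * π = m * π / N := by
    rw [hm']; field_simp
  rw [← hρ, cos_add_int_mul_pi, abs_mul, abs_zpow, abs_neg, abs_one, one_zpow, one_mul]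
  apply abs_cos_le_cos_of_le_abs (by positivity)
  · rw [abs_of_nonneg (by positivity)]
    gcongr
    nlinarith [pi_pos]
  · rw [abs_of_nonneg (by positivity), le_sub_iff_add_le, ← add_div, div_le_iff₀ hN']
    nlinarith [pi_pos]

lemma sin_sub_two_mul_le {A θ : ℝ} (hA₀ : 0 ≤ A) (hA : A ≤ π / 2) (hθ₀ : 0 ≤ θ) (hθ : θ ≤ π / 2) :
    sin (A - 2 * θ) ≤ (2 * cos θ - 1) * sin A := by
  have hsA : 0 ≤ sin A := sin_nonneg_of_nonneg_of_le_pi hA₀ (by linarith)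
  have hcA : 0 ≤ cos A := cos_nonneg_of_mem_Icc ⟨by linarith, hA⟩
  have hs2θ : 0 ≤ sin (2 * θ) := sin_nonneg_of_nonneg_of_le_pi (by linarith) (by linarith)
  have hcθ : 0 ≤ cos θ := cos_nonneg_of_mem_Icc ⟨by linarith, hθ⟩
  rw [sin_sub, cos_two_mul]
  nlinarith [mul_nonneg hcA hs2θ, mul_nonneg hsA (mul_nonneg hcθ (sub_nonneg.2 (cos_le_one θ)))]

lemma two_mul_one_sub_cos_mul_sin_sq_le {θ : ℝ} (hθ : 0 ≤ θ) {K₁ K₂ : ℕ}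
    (h₁ : 2 * θ * K₁ ≤ π / 2) (h₂ : 2 * θ * K₂ ≤ π / 2) :
    2 * (1 - cos θ) * sin (2 * θ * K₁) ^ 2 ≤
      sin (2 * θ * K₁) ^ 2 + sin (2 * θ * K₂) ^ 2
        - 2 * cos θ * sin (2 * θ * K₁) * sin (2 * θ * K₂) := by
  set t₁ := sin (2 * θ * K₁)
  set t₂ := sin (2 * θ * K₂)
  have hK₁ : 0 ≤ 2 * θ * K₁ := by positivity
  have hK₂ : 0 ≤ 2 * θ * K₂ := by positivity
  have ht₁ : 0 ≤ t₁ := sin_nonneg_of_nonneg_of_le_pi hK₁ (by linarith [pi_pos])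
  have hshrink : (2 * cos θ - 1) * t₁ ≤ t₁ := by nlinarith [cos_le_one θ]
  suffices 0 ≤ (t₂ - t₁) * (t₂ - (2 * cos θ - 1) * t₁) by linear_combination this
  rcases le_or_gt K₁ K₂ with hK | hK
  · have : t₁ ≤ t₂ := sin_le_sin_of_le_of_le_pi_div_two (by linarith [pi_pos]) h₂
      (by gcongr)
    exact mul_nonneg (by linarith) (by linarith)
  · -- `K₂ ≤ K₁ - 1`, and one step `2θ` down from `2θK₁` costs at least the factor `2 cos θ - 1`
    have hK' : (K₂ : ℝ) + 1 ≤ K₁ := by exact_mod_cast hK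
    have hθ' : θ ≤ π / 2 := by nlinarith [pi_pos]
    have : t₂ ≤ sin (2 * θ * K₁ - 2 * θ) :=
      sin_le_sin_of_le_of_le_pi_div_two (by linarith [pi_pos]) (by linarith) (by nlinarith)
    have := this.trans (sin_sub_two_mul_le hK₁ h₁ hθ hθ')
    exact mul_nonneg_of_nonpos_of_nonpos (by linarith) (by linarith)

lemma two_mul_sin_le_sin_four_mul {u : ℝ} (hu₀ : 0 ≤ u) (hu : u ≤ π / 8) :
    2 * sin u ≤ sin (4 * u) := by
  have hsu : 0 ≤ sin u := sin_nonneg_of_nonneg_of_le_pi hu₀ (by linarith [pi_pos])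
  have hc4 : 0 ≤ cos (4 * u) := cos_nonneg_of_mem_Icc ⟨by linarith [pi_pos], by linarith⟩
  have hcu : cos (2 * u) ≤ cos u :=
    cos_le_cos_of_nonneg_of_le_pi hu₀ (by linarith [pi_pos]) (by linarith)
  have hc2 : 0 ≤ cos (2 * u) := cos_nonneg_of_mem_Icc ⟨by linarith [pi_pos], by linarith⟩
  have h4 : sin (4 * u) = 4 * sin u * cos u * cos (2 * u) := by
    rw [show 4 * u = 2 * (2 * u) by ring, sin_two_mul, sin_two_mul]; ring
  have h2 : cos (4 * u) = 2 * cos (2 * u) ^ 2 - 1 := by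
    rw [show 4 * u = 2 * (2 * u) by ring, cos_two_mul]
  rw [h4]
  nlinarith [mul_le_mul_of_nonneg_left hcu (mul_nonneg hsu hc2)]

lemma sin_two_pi_div_le {N K : ℕ} (hK : 0 < K) (hKN : 4 * K ≤ N) :
    sin (2 * π / N) ≤ sin (2 * π * K / N) := by
  have hN : (0 : ℝ) < N := by exact_mod_cast (show 0 < N by omega)
  have hK' : (1 : ℝ) ≤ K := by exact_mod_cast hK
  have hKN' : 4 * (K : ℝ) ≤ N := by exact_mod_cast hKN
  apply sin_le_sin_of_le_of_le_pi_div_two (by linarith [pi_pos, div_pos two_pi_pos hN])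
  · rw [div_le_iff₀ hN]; nlinarith [pi_pos]
  · rw [div_le_div_iff_of_pos_right hN]; nlinarith [pi_pos]

lemma exists_abs_sin_eq_sin {N : ℕ} (hN : 4 ∣ N) {j : ℤ} (hj : 2 * |j| < N) :
    ∃ K : ℕ, 4 * K ≤ N ∧ (j ≠ 0 → 0 < K) ∧ |sin (2 * π * j / N)| = sin (2 * π * K / N) := by
  have hjN : 2 * j.natAbs < N := by rw [Int.abs_eq_natAbs] at hj; omega
  have hN' : (0 : ℝ) < N := by exact_mod_cast (show 0 < N by omega)
  have habs : |sin (2 * π * j / N)| = sin (2 * π * j.natAbs / N) := by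
    have hj' : (2 * |(j : ℝ)| : ℝ) < N := by exact_mod_cast hj
    rw [abs_sin_eq_sin_abs_of_abs_le_pi, abs_div, abs_mul, abs_of_pos two_pi_pos, abs_of_pos hN',
      Nat.cast_natAbs, Int.cast_abs]
    rw [abs_div, abs_mul, abs_of_pos two_pi_pos, abs_of_pos hN', div_le_iff₀ hN']
    nlinarith [pi_pos, abs_nonneg (j : ℝ)]
  rcases le_or_gt (4 * j.natAbs) N with h | h
  · exact ⟨j.natAbs, h, by omega, habs⟩
  · refine ⟨N / 2 - j.natAbs, by omega, by omega, ?_⟩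
    obtain ⟨n, rfl⟩ : 2 ∣ N := (Nat.dvd_trans (by norm_num) hN)
    rw [habs, Nat.mul_div_cancel_left n two_pos, Nat.cast_sub (by omega), ← sin_pi_sub]
    have hn : (n : ℝ) ≠ 0 := by exact_mod_cast (show n ≠ 0 by omega)
    congr 1
    push_cast
    field_simp

lemma norm_exp_add_exp_sub_sq (x y x' y' : ℝ) :
    ‖(Complex.exp (x * Complex.I) + Complex.exp (y * Complex.I))
        - (Complex.exp (x' * Complex.I) + Complex.exp (y' * Complex.I))‖ ^ 2 =
      4 * (sin ((x - x') / 2) ^ 2 + sin ((y - y') / 2) ^ 2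
        + 2 * sin ((x - x') / 2) * sin ((y - y') / 2) * cos ((x + x') / 2 - (y + y') / 2)) := by
  set s := (x - x') / 2
  set t := (y - y') / 2
  set p := (x + x') / 2
  set q := (y + y') / 2
  rw [show x = p + s by ring, show x' = p - s by ring, show y = q + t by ring,
    show y' = q - t by ring, Complex.sq_norm, Complex.normSq_apply]
  simp only [Complex.sub_re, Complex.add_re, Complex.sub_im, Complex.add_im,
    Complex.exp_ofReal_mul_I_re, Complex.exp_ofReal_mul_I_im]
  simp only [cos_add, cos_sub, sin_add, sin_sub]
  linear_combination (4 * sin s ^ 2) * sin_sq_add_cos_sq p + (4 * sin t ^ 2) * sin_sq_add_cos_sq q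

lemma sq_abs_add_sq_abs_sub_le {s₁ s₂ x c : ℝ} (h : |x| ≤ c) :
    |s₁| ^ 2 + |s₂| ^ 2 - 2 * c * |s₁| * |s₂| ≤ s₁ ^ 2 + s₂ ^ 2 + 2 * s₁ * s₂ * x := by
  have : |s₁ * s₂ * x| ≤ |s₁| * |s₂| * c := by
    rw [abs_mul, abs_mul]; gcongr
  rw [sq_abs, sq_abs]
  linarith [neg_abs_le (s₁ * s₂ * x)]

lemma two_mul_sin_pi_div_le_abs_sin {N : ℕ} (hN : 4 ∣ N) {k : ℤ} (hk₀ : k ≠ 0)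
    (hk : 2 * |k| < N) :
    2 * sin (π / (2 * N)) ≤ |sin (2 * π * k / N)| := by
  obtain ⟨K, hKN, hK₀, hK⟩ := exists_abs_sin_eq_sin hN hk
  have hN₄ : (4 : ℝ) ≤ N := by exact_mod_cast (show 4 ≤ N by omega)
  calc 2 * sin (π / (2 * N)) ≤ sin (4 * (π / (2 * N))) :=
        two_mul_sin_le_sin_four_mul (by positivity)
          (by rw [div_le_div_iff₀ (by positivity) (by norm_num)]; nlinarith [pi_pos])
    _ = sin (2 * π / N) := by congr 1; field_simp; ring
    _ ≤ |sin (2 * π * k / N)| := hK ▸ sin_two_pi_div_le (hK₀ hk₀) hKN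

lemma sq_two_mul_sin_mul_sin_le {N₁ N₂ : ℕ} (h4 : 4 ∣ N₁) (hdvd : N₁ ∣ N₂) (hN₂ : 0 < N₂)
    {j k m : ℤ} (hj : 2 * |j| < N₁) (hk : 2 * |k| < N₂) (hm : ¬(N₂ : ℤ) ∣ m)
    (hjk : j ≠ 0 ∨ k ≠ 0) :
    (2 * sin (π / (2 * N₂)) * sin (2 * π / N₁)) ^ 2 ≤
      sin (2 * π * j / N₁) ^ 2 + sin (2 * π * k / N₂) ^ 2
        + 2 * sin (2 * π * j / N₁) * sin (2 * π * k / N₂) * cos (m * π / N₂) := by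
  obtain ⟨r, hr⟩ := hdvd
  have h4₂ : 4 ∣ N₂ := h4.trans ⟨r, hr⟩
  obtain ⟨hN₁₀, hr₀⟩ : 0 < N₁ ∧ 0 < r := by simpa [hr] using hN₂
  have hN₁ : (4 : ℝ) ≤ N₁ := by exact_mod_cast Nat.le_of_dvd hN₁₀ h4
  have hN₂' : (1 : ℝ) ≤ N₂ := by exact_mod_cast hN₂
  have hr' : (N₂ : ℝ) = N₁ * r := by exact_mod_cast hr
  set s₁ := sin (2 * π * j / N₁)
  set s₂ := sin (2 * π * k / N₂)
  set σ := sin (2 * π / N₁)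
  set u := π / (2 * N₂) with hu_def
  have hu : 0 ≤ sin u := sin_nonneg_of_nonneg_of_le_pi (by positivity)
    (by rw [div_le_iff₀ (by positivity)]; nlinarith [pi_pos])
  have hσ : 0 ≤ σ := sin_nonneg_of_nonneg_of_le_pi (by positivity)
    (by rw [div_le_iff₀ (by positivity)]; nlinarith [pi_pos])
  have hform := sq_abs_add_sq_abs_sub_le (s₁ := s₁) (s₂ := s₂) (abs_cos_int_mul_pi_div_le hN₂ hm)
  rcases eq_or_ne j 0 with rfl | hj₀
  · have hσs₂ : 2 * sin u * σ ≤ |s₂| := by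
      nlinarith [sin_le_one (2 * π / N₁),
        two_mul_sin_pi_div_le_abs_sin h4₂ (hjk.resolve_left (not_not.2 rfl)) hk]
    have : s₁ = 0 := by simp [s₁]
    rw [this, ← sq_abs s₂]
    simpa using pow_le_pow_left₀ (by positivity) hσs₂ 2
  · obtain ⟨K₁, hK₁N, hK₁₀, hK₁⟩ := exists_abs_sin_eq_sin h4 hj
    obtain ⟨K₂, hK₂N, -, hK₂⟩ := exists_abs_sin_eq_sin h4₂ hk
    have hK₁' : 4 * (K₁ : ℝ) ≤ N₁ := by exact_mod_cast hK₁N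
    have hK₂' : 4 * (K₂ : ℝ) ≤ N₂ := by exact_mod_cast hK₂N
    have hangle₁ : 2 * π * K₁ / N₁ = 2 * (π / N₂) * ((r * K₁ : ℕ) : ℝ) := by
      rw [hr']; push_cast; field_simp
    have hangle₂ : 2 * π * K₂ / N₂ = 2 * (π / N₂) * K₂ := by ring
    have h₁ : 2 * (π / N₂) * ((r * K₁ : ℕ) : ℝ) ≤ π / 2 := by
      rw [← hangle₁, div_le_iff₀ (by positivity)]; nlinarith [pi_pos]
    have h₂ : 2 * (π / N₂) * (K₂ : ℝ) ≤ π / 2 := by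
      rw [← hangle₂, div_le_iff₀ (by positivity)]; nlinarith [pi_pos]
    have key := two_mul_one_sub_cos_mul_sin_sq_le (by positivity) h₁ h₂
    rw [← hangle₁, ← hangle₂, ← hK₁, ← hK₂] at key
    have hσs₁ : σ ≤ |s₁| := hK₁ ▸ sin_two_pi_div_le (hK₁₀ hj₀) hK₁N
    have hcos : 2 * (1 - cos (π / N₂)) = 4 * sin u ^ 2 := by
      rw [hu_def, show π / N₂ = 2 * (π / (2 * N₂)) by field_simp, cos_two_mul_eq_one_sub]; ring
    calc (2 * sin u * σ) ^ 2 = 4 * sin u ^ 2 * σ ^ 2 := by ring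
      _ ≤ 4 * sin u ^ 2 * |s₁| ^ 2 := by gcongr
      _ = 2 * (1 - cos (π / N₂)) * |s₁| ^ 2 := by rw [hcos]
      _ ≤ _ := key
      _ ≤ _ := hform

lemma even_sub_of_ite_parity {b : Bool} {m n : ℕ} (hm : if b then Even m else Odd m)
    (hn : if b then Even n else Odd n) : Even ((m : ℤ) - n) := by
  cases b <;> simp_all [Int.even_sub, Int.even_coe_nat, ← Nat.not_even_iff_odd]

lemma ite_parity_add_even {b : Bool} {m n : ℕ} (hm : if b then Even m else Odd m) (hn : Even n) :
    if b then Even (m + n) else Odd (m + n) := by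
  cases b
  · exact (hm : Odd m).add_even hn
  · exact (hm : Even m).add hn

lemma exists_ite_parity (b : Bool) {n₀ : ℕ} (hn₀ : 0 < n₀) :
    ∃ n, (n = n₀ ∨ n + 1 = n₀) ∧ if b then Even n else Odd n := by
  cases b <;> obtain ⟨k, rfl | rfl⟩ := Nat.even_or_odd' n₀
  · exact ⟨2 * (k - 1) + 1, Or.inr (by omega), odd_two_mul_add_one _⟩
  · exact ⟨2 * k + 1, Or.inl rfl, odd_two_mul_add_one _⟩
  · exact ⟨2 * k, Or.inl rfl, even_two_mul _⟩
  · exact ⟨2 * k, Or.inr rfl, even_two_mul _⟩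

noncomputable def ungPoint (N₁ N₂ n₁ n₂ : ℕ) : ℂ :=
  Complex.exp ((2 * π * n₁ / N₁ : ℝ) * Complex.I)
    + Complex.exp ((π * (2 * n₂ + 1) / N₂ : ℝ) * Complex.I)

lemma mem_ungSum_iff {N₁ N₂ : ℕ} {b₁ b₂ : Bool} {z : ℂ} :
    z ∈ ungSum N₁ N₂ b₁ b₂ ↔ ∃ n₁ n₂ : ℕ, n₁ < N₁ ∧ (if b₁ then Even n₁ else Odd n₁) ∧
      n₂ < N₂ ∧ (if b₂ then Even n₂ else Odd n₂) ∧ z = ungPoint N₁ N₂ n₁ n₂ := by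
  simp only [ungSum, ungPoint, Set.mem_ofPred_eq]
  push_cast
  rfl

lemma norm_ungPoint_sub_sq (N₁ N₂ a b c d : ℕ) :
    ‖ungPoint N₁ N₂ a c - ungPoint N₁ N₂ b d‖ ^ 2 =
      4 * (sin (π * (a - b) / N₁) ^ 2 + sin (π * (c - d) / N₂) ^ 2
        + 2 * sin (π * (a - b) / N₁) * sin (π * (c - d) / N₂)
          * cos (π * (a + b) / N₁ - π * (c + d + 1) / N₂)) := by
  rw [ungPoint, ungPoint, norm_exp_add_exp_sub_sq]
  ring_nf

lemma le_norm_sub_of_mem_ungSum {N₁ N₂ : ℕ} (h4 : 4 ∣ N₁) (hdvd : N₁ ∣ N₂) (hN₂ : 0 < N₂)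
    {b₁ b₂ : Bool} {p q : ℂ} (hp : p ∈ ungSum N₁ N₂ b₁ b₂) (hq : q ∈ ungSum N₁ N₂ b₁ b₂)
    (hpq : p ≠ q) :
    4 * sin (π / (2 * N₂)) * sin (2 * π / N₁) ≤ ‖p - q‖ := by
  obtain ⟨a, c, ha, ha₂, hc, hc₂, rfl⟩ := mem_ungSum_iff.1 hp
  obtain ⟨b, d, hb, hb₂, hd, hd₂, rfl⟩ := mem_ungSum_iff.1 hq
  obtain ⟨j, hj⟩ := even_sub_of_ite_parity ha₂ hb₂
  obtain ⟨k, hk⟩ := even_sub_of_ite_parity hc₂ hd₂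
  obtain ⟨r, hr⟩ := hdvd
  have hjk : j ≠ 0 ∨ k ≠ 0 := by
    by_contra! h
    obtain ⟨rfl, rfl⟩ : a = b ∧ c = d := by omega
    exact hpq rfl
  have hj' : 2 * |j| < N₁ := by rcases abs_cases j with h | h <;> omega
  have hk' : 2 * |k| < N₂ := by rcases abs_cases k with h | h <;> omega
  set m : ℤ := r * (a + b) - (c + d) - 1
  have hm : ¬(N₂ : ℤ) ∣ m := by
    have hodd : Odd m := ⟨r * (b + j) - d - k - 1, by grind⟩
    have h2 : (2 : ℤ) ∣ N₂ := by exact_mod_cast (Nat.dvd_trans (by norm_num) h4).trans ⟨r, hr⟩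
    exact fun h ↦ Int.not_even_iff_odd.2 hodd (even_iff_two_dvd.2 (h2.trans h))
  obtain ⟨hN₁, hr₀⟩ : 0 < N₁ ∧ 0 < r := by simpa [hr] using hN₂
  have hr' : (N₂ : ℝ) = N₁ * r := by exact_mod_cast hr
  have hj'' : ((a : ℤ) : ℝ) - b = j + j := by exact_mod_cast hj
  have hk'' : ((c : ℤ) : ℝ) - d = k + k := by exact_mod_cast hk
  have hm' : (m : ℝ) = r * (a + b) - (c + d) - 1 := by simp [m]
  have key := sq_two_mul_sin_mul_sin_le h4 ⟨r, hr⟩ hN₂ hj' hk' hm hjk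
  have hsq := norm_ungPoint_sub_sq N₁ N₂ a b c d
  push_cast at hj'' hk''
  rw [hj'', hk'', show π * (a + b) / N₁ - π * (c + d + 1) / N₂ = m * π / N₂ by
    rw [hm', hr']; field_simp; ring] at hsq
  refine le_of_pow_le_pow_left₀ two_ne_zero (norm_nonneg _) ?_
  rw [hsq]
  convert mul_le_mul_of_nonneg_left key (by norm_num : (0 : ℝ) ≤ 4) using 1 <;> ring_nf

lemma norm_ungPoint_sub_sq_of_straddle {N₁ N₂ r M ε n : ℕ} (hN₂ : 0 < N₂) (hr : N₂ = N₁ * r)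
    (hM : N₂ = M + M) (hn : n = M + r * ε ∨ n + 1 = M + r * ε) :
    ‖ungPoint N₁ N₂ (ε + 2) (n + 2 * r) - ungPoint N₁ N₂ ε n‖ ^ 2
      = (4 * sin (π / (2 * N₂)) * sin (2 * π / N₁)) ^ 2 := by
  obtain ⟨hN₁, hr₀⟩ : 0 < N₁ ∧ 0 < r := by simpa [hr] using hN₂
  have hr' : (N₂ : ℝ) = N₁ * r := by exact_mod_cast hr
  have hM' : (N₂ : ℝ) = M + M := by exact_mod_cast hM
  have hφ : π * ((ε + 2 : ℕ) + ε) / N₁ - π * ((n + 2 * r : ℕ) + n + 1) / N₂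
      = -((2 * ((n : ℝ) - (M + r * ε)) + 1) * (π / N₂) + π) := by
    push_cast; rw [hr'] at hM' ⊢; field_simp; linear_combination hM'
  have hδ : 2 * ((n : ℝ) - (M + r * ε)) + 1 = 1 ∨ 2 * ((n : ℝ) - (M + r * ε)) + 1 = -1 := by
    rcases hn with rfl | hn
    · left; push_cast; ring
    · right; linarith [(by exact_mod_cast hn : (n : ℝ) + 1 = M + r * ε)]
  have hcos : cos (π * ((ε + 2 : ℕ) + ε) / N₁ - π * ((n + 2 * r : ℕ) + n + 1) / N₂)
      = -cos (π / N₂) := by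
    rw [hφ, cos_neg, cos_add_pi]
    rcases hδ with hδ | hδ <;> simp [hδ]
  have e₁ : π * ((ε + 2 : ℕ) - ε : ℝ) / N₁ = 2 * π / N₁ := by push_cast; ring
  have e₂ : π * ((n + 2 * r : ℕ) - n : ℝ) / N₂ = 2 * π / N₁ := by
    push_cast; rw [hr']; field_simp; ring
  rw [norm_ungPoint_sub_sq, e₁, e₂, hcos,
    show π / N₂ = 2 * (π / (2 * N₂)) by field_simp, cos_two_mul_eq_one_sub]
  ring

lemma exists_mem_ungSum_norm_sub_eq {N₁ N₂ : ℕ} (h8 : 8 ≤ N₁) (hdvd : N₁ ∣ N₂) (hN₂ : 0 < N₂)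
    (heven : Even N₂) (b₁ b₂ : Bool) :
    ∃ p ∈ ungSum N₁ N₂ b₁ b₂, ∃ q ∈ ungSum N₁ N₂ b₁ b₂,
      p ≠ q ∧ 4 * sin (π / (2 * N₂)) * sin (2 * π / N₁) = ‖p - q‖ := by
  obtain ⟨r, hr⟩ := hdvd
  obtain ⟨M, hM⟩ := heven
  have hr₁ : 0 < r := Nat.pos_of_ne_zero (by rintro rfl; omega)
  have h8r : 8 * r ≤ N₂ := hr ▸ Nat.mul_le_mul_right r h8
  obtain ⟨ε, hε, hε₂⟩ := exists_ite_parity b₁ one_pos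
  have hrε : r * ε ≤ r := mul_le_of_le_one_right (Nat.zero_le r) (by omega)
  -- the second indices straddle `N₂ / 2`, which makes the two chords antiparallel
  obtain ⟨n, hn, hn₂⟩ := exists_ite_parity b₂ (n₀ := M + r * ε) (by omega)
  have hpos : 0 < 4 * sin (π / (2 * N₂)) * sin (2 * π / N₁) := by
    have hN₁' : (8 : ℝ) ≤ N₁ := by exact_mod_cast h8
    have hN₂' : (8 : ℝ) ≤ N₂ := by exact_mod_cast h8.trans (Nat.le_of_dvd hN₂ ⟨r, hr⟩)
    have := sin_pos_of_pos_of_lt_pi (x := π / (2 * N₂)) (by positivity)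
      (by rw [div_lt_iff₀ (by positivity)]; nlinarith [pi_pos])
    have := sin_pos_of_pos_of_lt_pi (x := 2 * π / N₁) (by positivity)
      (by rw [div_lt_iff₀ (by positivity)]; nlinarith [pi_pos])
    positivity
  have hdist := (pow_left_inj₀ hpos.le (norm_nonneg _) two_ne_zero).1
    (norm_ungPoint_sub_sq_of_straddle hN₂ hr hM hn).symm
  refine ⟨_, mem_ungSum_iff.2 ⟨ε + 2, n + 2 * r, by omega, ite_parity_add_even hε₂ even_two,
      by omega, ite_parity_add_even hn₂ (even_two_mul r), rfl⟩,
    _, mem_ungSum_iff.2 ⟨ε, n, by omega, hε₂, by omega, hn₂, rfl⟩, fun h ↦ ?_, hdist⟩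
  rw [h, sub_self, norm_zero] at hdist
  exact hpos.ne' hdist

/-- For powers of 2 `N₁, N₂` with `8 ≤ N₁ ≤ N₂`, all four
Ungerboeck sumsets `S^e_1+S^e_2`, `S^e_1+S^o_2`, `S^o_1+S^e_2`, `S^o_1+S^o_2`
have the same minimum Euclidean distance `4·sin(π/(2N₂))·sin(2π/N₁)`. -/
theorem stmt_16 (N₁ N₂ u₁ u₂ : ℕ) (h1 : N₁ = 2 ^ u₁) (h2 : N₂ = 2 ^ u₂)
    (h8 : 8 ≤ N₁) (hle : N₁ ≤ N₂) :
    ∀ b₁ b₂ : Bool,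
      IsLeast {d : ℝ | ∃ p ∈ ungSum N₁ N₂ b₁ b₂, ∃ q ∈ ungSum N₁ N₂ b₁ b₂,
          p ≠ q ∧ d = ‖p - q‖}
        (4 * sin (π / (2 * N₂)) * sin (2 * π / N₁)) := by
  intro b₁ b₂
  have hu : u₁ ≤ u₂ := (Nat.pow_le_pow_iff_right one_lt_two).1 (h1 ▸ h2 ▸ hle)
  have hu₁ : 2 ≤ u₁ := (Nat.pow_le_pow_iff_right one_lt_two).1 (by omega)
  have h4 : 4 ∣ N₁ := h1 ▸ Nat.pow_dvd_pow 2 hu₁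
  have hdvd : N₁ ∣ N₂ := h1 ▸ h2 ▸ Nat.pow_dvd_pow 2 hu
  have hN₂ : 0 < N₂ := by omega
  have heven : Even N₂ := even_iff_two_dvd.2 ((Nat.dvd_trans (by norm_num) h4).trans hdvd)
  refine ⟨exists_mem_ungSum_norm_sub_eq h8 hdvd hN₂ heven b₁ b₂, ?_⟩
  rintro _ ⟨p, hp, q, hq, hpq, rfl⟩
  exact le_norm_sub_of_mem_ungSum h4 hdvd hN₂ hp hq hpq
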